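/- arXiv:math/0202240 — 6 statements merged into one kernel-verified Lean document; each statement's English description precedes it below -/
import Mathlib

section
/- If a is a Hurwitz stable real polynomial of degree n and b is a real polynomial of degree n with Re[b(iω)/a(iω)] > 0 for all real ω, then b is also Hurwitz stable (b has no roots with nonnegative real part). -/
open Polynomial

noncomputable def evalI (p : Polynomial ℝ) (ω : ℝ) : ℂ :=
  (p.map (algebraMap ℝ ℂ)).eval ((ω : ℂ) * Complex.I)

noncomputable def evalNegI (p : Polynomial ℝ) (ω : ℝ) : ℂ :=
  (p.map (algebraMap ℝ ℂ)).eval (-((ω : ℂ) * Complex.I))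

def Hurwitz (p : Polynomial ℝ) : Prop :=
  ∀ z : ℂ, (p.map (algebraMap ℝ ℂ)).eval z = 0 → z.re < 0

/-! The ratio `f = b / a` is holomorphic on the closed right half-plane (`a` is Hurwitz) and bounded
at infinity (equal degrees). Phragmén–Lindelöf applied to `exp (-f)`, of modulus `exp (-Re f)`, gives
`Re f ≥ 0` there. If `Re f` vanished at an interior point, `‖exp (-f)‖` would attain its maximum `1`
there, so `exp (-f)` would be constant up to the boundary, contradicting `Re f(0) > 0`. Hence
`Re f > 0` on the closed half-plane, and `b` has no root in it. -/

open Filter Bornology Asymptotics Complex Set Topology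

theorem Polynomial.tendsto_eval_div_eval_cobounded {𝕜 : Type*} [NormedField 𝕜] {P Q : 𝕜[X]}
    (h : P.natDegree = Q.natDegree) :
    Tendsto (fun z => P.eval z / Q.eval z) (cobounded 𝕜) (𝓝 (P.leadingCoeff / Q.leadingCoeff)) := by
  have hequiv := (isEquivalent_cobounded_leading_monomial (P := P)).div
    (isEquivalent_cobounded_leading_monomial (P := Q))
  refine hequiv.symm.tendsto_nhds (tendsto_const_nhds.congr' ?_)
  filter_upwards [eventually_ne_cobounded 0] with z hz
  simp only [Pi.div_apply, h, mul_div_mul_right _ _ (pow_ne_zero _ hz)]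

section RightHalfPlane

variable {g : ℂ → ℂ}

theorem re_nonneg_of_re_nonneg_on_imaginaryAxis (hd : DiffContOnCl ℂ g {z | 0 < z.re})
    (hb : IsBoundedUnder (· ≤ ·) (cobounded ℂ ⊓ 𝓟 {z | 0 < z.re}) (‖g ·‖))
    (him : ∀ ω : ℝ, 0 ≤ (g (ω * I)).re) {z : ℂ} (hz : 0 ≤ z.re) : 0 ≤ (g z).re := by
  obtain ⟨C, hC⟩ := hb
  have hbound : ∀ᶠ w in cobounded ℂ ⊓ 𝓟 {z | 0 < z.re}, ‖exp (-g w)‖ ≤ Real.exp C := by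
    filter_upwards [hC] with w hw
    exact (norm_exp_le_exp_norm _).trans (Real.exp_le_exp.mpr (by simpa using hw))
  have hreal : Tendsto (fun x : ℝ => (x : ℂ)) atTop (cobounded ℂ ⊓ 𝓟 {z | 0 < z.re}) :=
    tendsto_inf.mpr ⟨RCLike.tendsto_ofReal_atTop_cobounded ℂ,
      tendsto_principal.mpr (eventually_gt_atTop 0)⟩
  have hPL : ‖exp (-g z)‖ ≤ 1 :=
    PhragmenLindelof.right_half_plane_of_bounded_on_real
      (f := fun w => exp (-g w)) (differentiable_exp.comp_diffContOnCl hd.neg)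
      ⟨1, one_lt_two, 0, IsBigO.of_bound (Real.exp C) (by simpa using hbound)⟩
      ⟨Real.exp C, hreal.eventually hbound⟩
      (fun ω => by simpa [norm_exp] using him ω) hz
  simpa [norm_exp] using hPL

theorem re_pos_of_re_pos_on_imaginaryAxis (hd : DiffContOnCl ℂ g {z | 0 < z.re})
    (hb : IsBoundedUnder (· ≤ ·) (cobounded ℂ ⊓ 𝓟 {z | 0 < z.re}) (‖g ·‖))
    (him : ∀ ω : ℝ, 0 < (g (ω * I)).re) {z : ℂ} (hz : 0 ≤ z.re) : 0 < (g z).re := by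
  have hnonneg : ∀ w : ℂ, 0 ≤ w.re → 0 ≤ (g w).re := fun w hw =>
    re_nonneg_of_re_nonneg_on_imaginaryAxis hd hb (fun ω => (him ω).le) hw
  refine (hnonneg z hz).lt_of_ne fun hgz => ?_
  rcases hz.lt_or_eq with hz_pos | hz_zero
  · have hmax : IsMaxOn (norm ∘ fun w => exp (-g w)) {w | 0 < w.re} z := fun w hw => by
      simpa [norm_exp, ← hgz] using hnonneg w (le_of_lt hw)
    have hconst := eqOn_closure_of_isPreconnected_of_isMaxOn_norm
      (convex_halfSpace_re_gt 0).isPreconnected (isOpen_lt continuous_const continuous_re)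
      (differentiable_exp.comp_diffContOnCl hd.neg) hz_pos hmax
      (x := 0) (by simp)
    have hg0 : (g 0).re = 0 := by simpa [norm_exp, ← hgz] using congrArg norm hconst
    simpa [hg0] using him 0
  · have hzI : z = (z.im : ℂ) * I := by apply Complex.ext <;> simp [← hz_zero]
    exact (him z.im).ne' (hzI ▸ hgz.symm)

end RightHalfPlane

/-- SPR implies the numerator is Hurwitz stable. -/
theorem stmt3 (n : ℕ) (a b : Polynomial ℝ) (ha : Hurwitz a)
    (hdega : a.degree = n) (hdegb : b.degree = n)
    (hspr : ∀ ω : ℝ, 0 < (evalI b ω / evalI a ω).re) :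
    Hurwitz b := by
  set A := a.map (algebraMap ℝ ℂ)
  set B := b.map (algebraMap ℝ ℂ)
  have hA : ∀ z ∈ closure {z : ℂ | 0 < z.re}, A.eval z ≠ 0 := fun z hz hAz => by
    rw [closure_setOfPred_lt_re] at hz
    exact (ha z hAz).not_ge hz
  have hdeg : B.natDegree = A.natDegree := by
    simp only [B, A, natDegree_map, natDegree_eq_of_degree_eq_some hdega,
      natDegree_eq_of_degree_eq_some hdegb]
  have hd : DiffContOnCl ℂ (fun z => B.eval z / A.eval z) {z | 0 < z.re} :=
    DifferentiableOn.diffContOnCl fun z hz =>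
      (B.differentiableAt.div A.differentiableAt (hA z hz)).differentiableWithinAt
  have hb := ((tendsto_eval_div_eval_cobounded hdeg).norm.isBoundedUnder_le).mono
    (inf_le_left (b := 𝓟 {z : ℂ | 0 < z.re}))
  intro z (hBz : B.eval z = 0)
  by_contra! hz
  simpa [hBz] using re_pos_of_re_pos_on_imaginaryAxis hd hb hspr hz
end

section
/- Given a Hurwitz stable monic real polynomial a of degree n, the normalized SPR region Ω_{1a} ⊂ ℝⁿ is unbounded: for every M > 0 there exists (x₁,…,xₙ) ∈ Ω_{1a} with xₙ > M. -/
open Polynomial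

lemma aux_nonneg : ∀ (n : ℕ) (P : Polynomial ℂ), P.natDegree = n →
    (∀ w : ℂ, P.eval w = 0 → w.re < 0) → ∀ z : ℂ, z.re = 0 →
    0 ≤ ((P.derivative.eval z) * (starRingEnd ℂ) (P.eval z)).re := by
  intro n
  induction n using Nat.strong_induction_on with
  | _ n ih =>
    intro P hdeg hroots z hz
    rcases Nat.eq_zero_or_pos n with h0 | hpos
    · subst h0
      obtain ⟨c, rfl⟩ := Polynomial.natDegree_eq_zero.mp hdeg
      simp
    · have hP0 : P ≠ 0 := by
        intro h
        have := hroots 1 (by simp [h])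
        norm_num at this
      have hdegpos : 0 < P.degree := by
        rw [← Polynomial.natDegree_pos_iff_degree_pos]; omega
      obtain ⟨r, hr⟩ := Complex.exists_root hdegpos
      have hrre : r.re < 0 := hroots r hr
      obtain ⟨Q, hQ⟩ := Polynomial.dvd_iff_isRoot.mpr hr
      have hQ0 : Q ≠ 0 := by rintro rfl; rw [mul_zero] at hQ; exact hP0 hQ
      have hQdeg : Q.natDegree = n - 1 := by
        have h1 := Polynomial.natDegree_mul (Polynomial.X_sub_C_ne_zero r) hQ0
        rw [← hQ, hdeg, Polynomial.natDegree_X_sub_C] at h1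
        omega
      have hQroots : ∀ w : ℂ, Q.eval w = 0 → w.re < 0 := by
        intro w hw
        exact hroots w (by rw [hQ]; simp [hw])
      have ihQ := ih (n-1) (by omega) Q hQdeg hQroots z hz
      have hder : P.derivative = Q + (X - C r) * Q.derivative := by
        rw [hQ, Polynomial.derivative_mul, Polynomial.derivative_X_sub_C, one_mul]
      rw [hder, hQ]
      set E := Q.eval z with hE
      set D := Q.derivative.eval z with hD
      have hw : (z - r).re = -r.re := by simp [hz]
      have expand : (((Q + (X - C r) * Q.derivative).eval z) *
          (starRingEnd ℂ) (((X - C r) * Q).eval z)).re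
          = Complex.normSq E * (-r.re) + Complex.normSq (z - r) * (D * (starRingEnd ℂ) E).re := by
        simp only [Polynomial.eval_add, Polynomial.eval_mul, Polynomial.eval_sub,
          Polynomial.eval_X, Polynomial.eval_C, map_mul]
        have h1 : (E + (z - r) * D) * ((starRingEnd ℂ) (z - r) * (starRingEnd ℂ) E)
            = (starRingEnd ℂ) (z - r) * (E * (starRingEnd ℂ) E)
              + ((z - r) * (starRingEnd ℂ) (z - r)) * (D * (starRingEnd ℂ) E) := by ring
        rw [h1, Complex.mul_conj, Complex.mul_conj]
        simp [Complex.add_re, Complex.mul_re, Complex.conj_re, Complex.conj_im, hw, hz]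
        ring
      rw [expand]
      have : 0 ≤ Complex.normSq E * (-r.re) :=
        mul_nonneg (Complex.normSq_nonneg _) (by linarith)
      have : 0 ≤ Complex.normSq (z - r) * (D * (starRingEnd ℂ) E).re :=
        mul_nonneg (Complex.normSq_nonneg _) ihQ
      linarith

lemma aux_pos (P : Polynomial ℂ) (hdeg : P.natDegree ≠ 0)
    (hroots : ∀ w : ℂ, P.eval w = 0 → w.re < 0) (z : ℂ) (hz : z.re = 0) :
    0 < ((P.derivative.eval z) * (starRingEnd ℂ) (P.eval z)).re := by
  have hP0 : P ≠ 0 := fun h => by simpa using hdeg (by simp [h])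
  have hdegpos : 0 < P.degree := by
    rw [← Polynomial.natDegree_pos_iff_degree_pos]; omega
  obtain ⟨r, hr⟩ := Complex.exists_root hdegpos
  have hrre : r.re < 0 := hroots r hr
  obtain ⟨Q, hQ⟩ := Polynomial.dvd_iff_isRoot.mpr hr
  have hQ0 : Q ≠ 0 := by rintro rfl; rw [mul_zero] at hQ; exact hP0 hQ
  have hQroots : ∀ w : ℂ, Q.eval w = 0 → w.re < 0 := by
    intro w hw
    exact hroots w (by rw [hQ]; simp [hw])
  have ihQ := aux_nonneg Q.natDegree Q rfl hQroots z hz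
  have hPz : P.eval z ≠ 0 := fun h => by
    have := hroots z h; linarith [hz ▸ this]
  have hEne : Q.eval z ≠ 0 := by
    intro h; apply hPz; rw [hQ]; simp [h]
  have hder : P.derivative = Q + (X - C r) * Q.derivative := by
    rw [hQ, Polynomial.derivative_mul, Polynomial.derivative_X_sub_C, one_mul]
  rw [hder, hQ]
  set E := Q.eval z with hE
  set D := Q.derivative.eval z with hD
  have hw : (z - r).re = -r.re := by simp [hz]
  have expand : (((Q + (X - C r) * Q.derivative).eval z) *
      (starRingEnd ℂ) (((X - C r) * Q).eval z)).re
      = Complex.normSq E * (-r.re) + Complex.normSq (z - r) * (D * (starRingEnd ℂ) E).re := by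
    simp only [Polynomial.eval_add, Polynomial.eval_mul, Polynomial.eval_sub,
      Polynomial.eval_X, Polynomial.eval_C, map_mul]
    have h1 : (E + (z - r) * D) * ((starRingEnd ℂ) (z - r) * (starRingEnd ℂ) E)
        = (starRingEnd ℂ) (z - r) * (E * (starRingEnd ℂ) E)
          + ((z - r) * (starRingEnd ℂ) (z - r)) * (D * (starRingEnd ℂ) E) := by ring
    rw [h1, Complex.mul_conj, Complex.mul_conj]
    simp [Complex.add_re, Complex.mul_re, Complex.conj_re, Complex.conj_im, hw, hz]
    ring
  rw [expand]
  have h2 : 0 < Complex.normSq E * (-r.re) :=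
    mul_pos (Complex.normSq_pos.mpr hEne) (by linarith)
  have h3 : 0 ≤ Complex.normSq (z - r) * (D * (starRingEnd ℂ) E).re :=
    mul_nonneg (Complex.normSq_nonneg _) ihQ
  linarith

lemma rep (m : ℕ) (b : Polynomial ℝ) (hb : b.Monic) (hdeg : b.natDegree = m+1) :
    (X : Polynomial ℝ)^(m+1) + ∑ i : Fin (m+1), C (b.coeff (m - (i:ℕ))) * X^(m + 1 - ((i:ℕ)+1))
      = b := by
  have h1 : (∑ i : Fin (m+1), C (b.coeff (m - (i:ℕ))) * X^(m + 1 - ((i:ℕ)+1)) : Polynomial ℝ)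
      = ∑ i ∈ Finset.range (m+1), C (b.coeff i) * X^i := by
    rw [Fin.sum_univ_eq_sum_range (fun i => C (b.coeff (m - i)) * X^(m + 1 - (i+1)))]
    rw [← Finset.sum_range_reflect (fun i => C (b.coeff i) * X^i) (m+1)]
    apply Finset.sum_congr rfl
    intro i hi
    congr 2 <;> omega
  rw [h1]
  have h2 : b = ∑ i ∈ Finset.range (m+2), C (b.coeff i) * X^i := by
    conv_lhs => rw [b.as_sum_range' (m+2) (by omega)]
    apply Finset.sum_congr rfl
    intro i _
    rw [Polynomial.C_mul_X_pow_eq_monomial]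
  rw [Finset.sum_range_succ] at h2
  have h3 : b.coeff (m+1) = 1 := hdeg ▸ hb.coeff_natDegree
  rw [h3, map_one, one_mul] at h2
  rw [add_comm]
  exact h2.symm

/-- The normalized SPR region Ω_{1a} is unbounded: for every M > 0 there is a
point of Ω_{1a} whose last coordinate xₙ exceeds M. (Here n = m + 1.) -/
theorem stmt10 (m : ℕ) (a : Polynomial ℝ) (ha : Hurwitz a)
    (hmon : a.Monic) (hdeg : a.natDegree = m + 1) :
    ∀ M : ℝ, 0 < M → ∃ x : Fin (m+1) → ℝ,
      (∀ ω : ℝ,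
        0 < (evalI (Polynomial.X ^ (m+1) +
              ∑ i : Fin (m+1), Polynomial.C (x i) * Polynomial.X ^ (m + 1 - ((i : ℕ) + 1))) ω
            / evalI a ω).re) ∧
      M < x (Fin.last m) := by
  intro M hM
  set A := a.map (algebraMap ℝ ℂ) with hA
  have hAmonic : A.Monic := hmon.map _
  have hAdeg : A.natDegree = m + 1 := by
    rw [hA, hmon.natDegree_map]; exact hdeg
  -- no nonnegative real roots
  have hreal : ∀ t : ℝ, 0 ≤ t → a.eval t ≠ 0 := by
    intro t ht h
    have h2 : A.eval ((algebraMap ℝ ℂ) t) = 0 := by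
      rw [hA, Polynomial.eval_map, Polynomial.eval₂_at_apply, h, map_zero]
    have := ha _ h2
    rw [Complex.coe_algebraMap] at this
    simp at this
    linarith
  -- a(0) > 0
  have ha0 : 0 < a.coeff 0 := by
    rw [Polynomial.coeff_zero_eq_eval_zero]
    have htends : Filter.Tendsto (fun x => a.eval x) Filter.atTop Filter.atTop := by
      apply Polynomial.tendsto_atTop_of_leadingCoeff_nonneg
      · rw [← Polynomial.natDegree_pos_iff_degree_pos]; omega
      · rw [hmon.leadingCoeff]; norm_num
    obtain ⟨t, ht1, ht2⟩ := ((htends.eventually_gt_atTop 0).and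
      (Filter.eventually_ge_atTop (0:ℝ))).exists
    by_contra hle
    push_neg at hle
    have hlt : a.eval 0 < 0 := lt_of_le_of_ne hle (hreal 0 le_rfl)
    have hsub := intermediate_value_Icc ht2 (a.continuousOn (s := Set.Icc 0 t))
    have h0mem : (0:ℝ) ∈ Set.Icc (a.eval 0) (a.eval t) := ⟨le_of_lt hlt, le_of_lt ht1⟩
    obtain ⟨c, hc1, hc2⟩ := hsub h0mem
    exact hreal c hc1.1 hc2
  -- coeff 1 > 0
  have ha1 : 0 < a.coeff 1 := by
    have hp := aux_pos A (by omega) ha 0 (by simp)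
    have e1 : A.derivative.eval 0 = (a.coeff 1 : ℂ) := by
      rw [← Polynomial.coeff_zero_eq_eval_zero, Polynomial.coeff_derivative,
        Polynomial.coeff_map]
      rw [Complex.coe_algebraMap]
      push_cast; ring
    have e2 : A.eval 0 = (a.coeff 0 : ℂ) := by
      rw [← Polynomial.coeff_zero_eq_eval_zero, Polynomial.coeff_map, Complex.coe_algebraMap]
    rw [e1, e2, Complex.conj_ofReal, ← Complex.ofReal_mul, Complex.ofReal_re] at hp
    nlinarith
  -- the construction
  set lam : ℝ := (M + 1 + |a.coeff 0|) / a.coeff 1 with hlam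
  have hlampos : 0 < lam := by
    apply div_pos _ ha1
    have := abs_nonneg (a.coeff 0)
    linarith
  set b : Polynomial ℝ := a + C lam * a.derivative with hb
  have hdltb : (C lam * a.derivative).degree < a.degree := by
    rw [Polynomial.degree_C_mul hlampos.ne']
    exact Polynomial.degree_derivative_lt hmon.ne_zero
  have hbmonic : b.Monic := hmon.add_of_left hdltb
  have hbdeg : b.natDegree = m + 1 := by
    rw [hb]
    rw [Polynomial.natDegree_eq_of_degree_eq (Polynomial.degree_add_eq_left_of_degree_lt hdltb)]
    exact hdeg
  refine ⟨fun i => b.coeff (m - (i : ℕ)), ?_, ?_⟩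
  · intro ω
    rw [rep m b hbmonic hbdeg]
    set z : ℂ := (ω : ℂ) * Complex.I with hz
    have hzre : z.re = 0 := by simp [hz]
    have hAz : A.eval z ≠ 0 := by
      intro h
      have := ha z h
      rw [hzre] at this
      exact lt_irrefl 0 this
    have heb : evalI b ω = A.eval z + (lam : ℂ) * A.derivative.eval z := by
      rw [evalI, hb, Polynomial.map_add, Polynomial.map_mul, Polynomial.map_C,
        ← Polynomial.derivative_map]
      simp [hA, hz]
    have hea : evalI a ω = A.eval z := rfl
    rw [heb, hea]
    have hkey : ((A.eval z + (lam : ℂ) * A.derivative.eval z) / A.eval z).re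
        = ((A.eval z + (lam : ℂ) * A.derivative.eval z) * (starRingEnd ℂ) (A.eval z)).re
          / Complex.normSq (A.eval z) := by
      rw [Complex.div_re, Complex.mul_re, Complex.conj_re, Complex.conj_im,
        Complex.normSq_apply]
      ring
    rw [hkey]
    apply div_pos
    · have hnum : ((A.eval z + (lam : ℂ) * A.derivative.eval z)
          * (starRingEnd ℂ) (A.eval z)).re
          = Complex.normSq (A.eval z)
            + lam * ((A.derivative.eval z) * (starRingEnd ℂ) (A.eval z)).re := by
        rw [add_mul, Complex.add_re, Complex.mul_conj, Complex.ofReal_re, mul_assoc,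
          Complex.re_ofReal_mul]
      rw [hnum]
      have h1 : 0 < Complex.normSq (A.eval z) := Complex.normSq_pos.mpr hAz
      have h2 : 0 ≤ ((A.derivative.eval z) * (starRingEnd ℂ) (A.eval z)).re :=
        aux_nonneg (m+1) A hAdeg ha z hzre
      nlinarith
    · exact Complex.normSq_pos.mpr hAz
  · show M < b.coeff (m - ((Fin.last m : Fin (m+1)) : ℕ))
    have hml : ((Fin.last m : Fin (m+1)) : ℕ) = m := rfl
    rw [hml, Nat.sub_self]
    have hc : b.coeff 0 = a.coeff 0 + lam * a.coeff 1 := by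
      rw [hb]
      simp [Polynomial.coeff_derivative]
    rw [hc, hlam, div_mul_cancel₀ _ ha1.ne']
    have := neg_abs_le (a.coeff 0)
    linarith
end

section
/- Given a monic Hurwitz real polynomial a of degree n, the weak SPR region Ω^W_{1a} ⊂ ℝ^{n-1} is nonempty. -/
open Polynomial

/-!
The normalized derivative `b = a' / (m + 1)` is a witness. Over `ℂ`, `a'/a = ∑ 1 / (s - r)`
over the roots `r` of `a`, and at `s = iω` each term has real part `-Re r / |iω - r|² > 0`
because `a` is Hurwitz.
-/

namespace Polynomial

theorem eq_X_pow_add_sum_coeff {R : Type*} [Semiring R] {q : R[X]} {m : ℕ}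
    (hdeg : q.natDegree ≤ m) (hlead : q.coeff m = 1) :
    q = X ^ m + ∑ i : Fin m, C (q.coeff (m - (i + 1))) * X ^ (m - (i + 1)) := by
  conv_lhs => rw [as_sum_range_C_mul_X_pow' q (Nat.lt_succ_of_le hdeg)]
  rw [Finset.sum_range_succ, hlead, C_1, one_mul, add_comm,
    Fin.sum_univ_eq_sum_range (fun i => C (q.coeff (m - (i + 1))) * X ^ (m - (i + 1))),
    ← Finset.sum_range_reflect]
  refine congrArg (X ^ m + ·) (Finset.sum_congr rfl fun k _ => ?_)
  rw [show m - (k + 1) = m - 1 - k by omega]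

theorem re_eval_derivative_div_eval_pos {p : ℂ[X]} (hp : 0 < p.degree) {z : ℂ}
    (hz : ∀ r ∈ p.roots, r.re < z.re) : 0 < (p.derivative.eval z / p.eval z).re := by
  have hp0 : p ≠ 0 := ne_zero_of_degree_gt hp
  have hzr : ∀ r ∈ p.roots, z - r ≠ 0 := fun r hr h =>
    (hz r hr).ne (by rw [sub_eq_zero.mp h])
  have hpz : p.eval z ≠ 0 := fun h => (hz z ((mem_roots hp0).mpr h)).false
  have hroots : p.roots ≠ 0 := by
    rw [← Multiset.card_pos, ← (IsAlgClosed.splits p).natDegree_eq_card_roots]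
    exact natDegree_pos_iff_degree_pos.mpr hp
  rw [(IsAlgClosed.splits p).eval_derivative_div_eval_of_ne_zero hpz,
    ← Complex.coe_reAddGroupHom, map_multiset_sum, Multiset.map_map]
  simpa using Multiset.sum_lt_sum_of_nonempty (f := fun _ => (0 : ℝ)) hroots fun r hr =>
    div_pos (sub_pos.mpr (hz r hr)) (Complex.normSq_pos.mpr (hzr r hr))

end Polynomial

theorem Hurwitz.re_evalI_derivative_div_evalI_pos {a : ℝ[X]} (ha : Hurwitz a)
    (hdeg : 0 < a.degree) (ω : ℝ) : 0 < (evalI (derivative a) ω / evalI a ω).re := by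
  have hdeg' : 0 < (a.map (algebraMap ℝ ℂ)).degree := by rwa [degree_map]
  rw [evalI, evalI, ← derivative_map]
  refine re_eval_derivative_div_eval_pos hdeg' fun r hr => ?_
  simpa using ha r (isRoot_of_mem_roots hr)

/-- The weak SPR region Ω^W_{1a} is nonempty. (Here n = m + 1.) -/
theorem stmt14 (m : ℕ) (a : Polynomial ℝ) (ha : Hurwitz a)
    (hmona : a.Monic) (hdega : a.natDegree = m + 1) :
    ∃ x : Fin m → ℝ,
      ∀ ω : ℝ,
        0 < (evalI (Polynomial.X ^ m +
              ∑ i : Fin m, Polynomial.C (x i) * Polynomial.X ^ (m - ((i : ℕ) + 1))) ω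
            / evalI a ω).re := by
  set c : ℝ := ((m : ℝ) + 1)⁻¹
  have hc : 0 < c := by positivity
  have hdeg : (C c * derivative a).natDegree ≤ m :=
    (natDegree_C_mul_le _ _).trans ((natDegree_derivative_le a).trans (by omega))
  have hlead : (C c * derivative a).coeff m = 1 := by
    rw [coeff_C_mul, coeff_derivative, ← hdega, hmona.coeff_natDegree, one_mul]
    exact inv_mul_cancel₀ (by positivity)
  refine ⟨fun i => (C c * derivative a).coeff (m - (i + 1)), fun ω => ?_⟩
  rw [← eq_X_pow_add_sum_coeff hdeg hlead, evalI, Polynomial.map_mul, map_C, eval_mul, eval_C,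
    ← evalI, mul_div_assoc, Complex.coe_algebraMap, Complex.re_ofReal_mul]
  have hpos : 0 < a.degree := natDegree_pos_iff_degree_pos.mp (by omega)
  exact mul_pos hc (ha.re_evalI_derivative_div_evalI_pos hpos ω)
end

section
/- Given a monic Hurwitz real polynomial a of degree n, the weak SPR region Ω^W_{1a} ⊂ ℝ^{n-1} is convex. -/
open Polynomial

/-- The weak SPR region Ω^W_{1a} ⊂ ℝ^{n-1} is convex. (Here n = m + 1.) -/
theorem stmt15 (m : ℕ) (a : Polynomial ℝ) (ha : Hurwitz a)
    (hmona : a.Monic) (hdega : a.natDegree = m + 1) :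
    Convex ℝ {x : Fin m → ℝ |
      ∀ ω : ℝ,
        0 < (evalI (Polynomial.X ^ m +
              ∑ i : Fin m, Polynomial.C (x i) * Polynomial.X ^ (m - ((i : ℕ) + 1))) ω
            / evalI a ω).re} := by
  intro x hx y hy t s ht hs hts ω
  have hx := hx ω
  have hy := hy ω
  set A := evalI a ω with hAdef
  have hA0 : A ≠ 0 := by
    intro h
    rw [h, div_zero] at hx
    simp at hx
  set u := evalI (Polynomial.X ^ m +
      ∑ i : Fin m, Polynomial.C (x i) * Polynomial.X ^ (m - ((i : ℕ) + 1))) ω with hu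
  set v := evalI (Polynomial.X ^ m +
      ∑ i : Fin m, Polynomial.C (y i) * Polynomial.X ^ (m - ((i : ℕ) + 1))) ω with hv
  have hts' : (t : ℂ) + (s : ℂ) = 1 := by exact_mod_cast hts
  have hcomb : evalI (Polynomial.X ^ m +
      ∑ i : Fin m, Polynomial.C ((t • x + s • y) i) * Polynomial.X ^ (m - ((i : ℕ) + 1))) ω
      = (t : ℂ) * u + (s : ℂ) * v := by
    simp only [hu, hv, evalI, Polynomial.map_add, Polynomial.map_sum, Polynomial.map_mul,
      Polynomial.map_pow, map_C, map_X, eval_add, eval_finset_sum, eval_mul, eval_pow,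
      eval_C, eval_X, Complex.coe_algebraMap, Pi.add_apply, Pi.smul_apply, smul_eq_mul]
    rw [mul_add, mul_add, Finset.mul_sum, Finset.mul_sum, add_add_add_comm,
      ← Finset.sum_add_distrib, ← add_mul, hts', one_mul]
    congr 1
    apply Finset.sum_congr rfl
    intros i _
    push_cast
    ring
  show 0 < _
  rw [hcomb, add_div, mul_div_assoc, mul_div_assoc, Complex.add_re]
  have h1 : ((t : ℂ) * (u / A)).re = t * (u / A).re := by
    simp [Complex.mul_re]
  have h2 : ((s : ℂ) * (v / A)).re = s * (v / A).re := by
    simp [Complex.mul_re]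
  rw [h1, h2]
  rcases eq_or_lt_of_le ht with h | h
  · have : s = 1 := by linarith
    simp [← h, this]
    exact hy
  · have := mul_nonneg hs hy.le
    nlinarith [mul_pos h hx]
end

section
/- Let a be a monic Hurwitz real polynomial of degree n ≥ 2. If (x₁,…,x_{n-1}) ∈ Ω^W_{1a}, then there exists ε₀ > 0 such that for all 0 < ε < ε₀, the shifted point (x₁−ε, x₂−ε, …, x_{n-1}−ε) also belongs to Ω^W_{1a}. In particular, no point of Ω^W_{1a} is isolated, and the intersection of finitely many weak SPR regions is never a single point. -/
open Polynomial

/-!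
Write the perturbed numerator as `p - ε q` with `q = s^(n-2) + ⋯ + 1`, so that
`Re (p_ε/a)(iω) = Re (p/a)(iω) - ε Re (q/a)(iω)`. Since `a` is monic of degree `deg q + 2`,
`(q/a)(iω) · (iω)² → 1`, and `(iω)² = -ω²` makes `Re (q/a)(iω)` nonpositive for large `|ω|`:
there the perturbation only helps. On the remaining compact range of `ω`, the positive minimum
of `Re (p/a)(iω)` dominates `ε` times the maximum of `Re (q/a)(iω)`.
-/

open Filter Bornology Topology

theorem exists_pos_forall_pos_sub_mul {X : Type*} [TopologicalSpace X] {f g : X → ℝ}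
    (hf : Continuous f) (hg : Continuous g) (hf_pos : ∀ x, 0 < f x)
    (hg_nonpos : ∀ᶠ x in cocompact X, g x ≤ 0) :
    ∃ ε₀ : ℝ, 0 < ε₀ ∧ ∀ ε : ℝ, 0 < ε → ε < ε₀ → ∀ x, 0 < f x - ε * g x := by
  obtain ⟨K, hK, hgK⟩ := mem_cocompact.mp hg_nonpos
  obtain ⟨M, hM, hfM⟩ := hK.exists_forall_le' hf.continuousOn fun x _ => hf_pos x
  obtain ⟨N, hN⟩ := hK.bddAbove_image hg.continuousOn
  refine ⟨M / (max N 0 + 1), by positivity, fun ε hε hεε x => ?_⟩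
  by_cases hx : x ∈ K
  · have hgx : g x ≤ max N 0 := (hN ⟨x, hx, rfl⟩).trans (le_max_left _ _)
    have hεM : ε * (max N 0 + 1) < M := (lt_div_iff₀ (by positivity)).mp hεε
    nlinarith [hfM x hx, mul_le_mul_of_nonneg_left hgx hε.le]
  · nlinarith [hf_pos x, mul_nonpos_of_nonneg_of_nonpos hε.le (hgK hx)]

theorem tendsto_eval_div_pow_cobounded (P : ℂ[X]) {d : ℕ} (hP : P.natDegree ≤ d) :
    Tendsto (fun z => P.eval z / z ^ d) (cobounded ℂ) (𝓝 (P.coeff d)) := by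
  have hlim : Tendsto (fun z : ℂ => (reflect d P).eval z⁻¹) (cobounded ℂ) (𝓝 (P.coeff d)) := by
    simpa [Function.comp_def, ← coeff_zero_eq_eval_zero, coeff_reflect] using
      ((reflect d P).continuous.tendsto 0).comp tendsto_inv₀_cobounded
  refine hlim.congr' ?_
  filter_upwards [eventually_ne_cobounded 0] with z hz
  let := invertibleOfNonzero hz
  rw [eq_div_iff (pow_ne_zero d hz), ← invOf_eq_inv]
  exact eval₂_reflect_mul_pow (RingHom.id ℂ) z d P hP

theorem tendsto_eval_div_eval_mul_pow_cobounded (P A : ℂ[X]) {d k : ℕ} (hP : P.natDegree ≤ d)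
    (hA : A.natDegree = d + k) (hA0 : A ≠ 0) :
    Tendsto (fun z => P.eval z / A.eval z * z ^ k) (cobounded ℂ)
      (𝓝 (P.coeff d / A.leadingCoeff)) := by
  have hA0' : A.coeff (d + k) ≠ 0 := by rwa [← hA, ← leadingCoeff, leadingCoeff_ne_zero]
  rw [leadingCoeff, hA]
  refine ((tendsto_eval_div_pow_cobounded P hP).div
    (tendsto_eval_div_pow_cobounded A hA.le) hA0').congr' ?_
  filter_upwards [eventually_ne_cobounded 0] with z hz
  rw [Pi.div_apply, pow_add, div_div_eq_mul_div, div_mul_eq_mul_div, mul_comm (z ^ d),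
    ← mul_assoc, mul_div_cancel_right₀ _ (pow_ne_zero d hz), div_mul_eq_mul_div]

theorem tendsto_ofReal_mul_I_cobounded :
    Tendsto (fun ω : ℝ => (ω : ℂ) * Complex.I) (cobounded ℝ) (cobounded ℂ) := by
  rw [← tendsto_norm_atTop_iff_cobounded]
  simp only [norm_mul, Complex.norm_real, Complex.norm_I, mul_one]
  exact tendsto_norm_cobounded_atTop

theorem eventually_re_evalI_div_nonpos (Q a : ℝ[X]) {d : ℕ} (hQ : Q.natDegree ≤ d)
    (ha : a.natDegree = d + 2) (hpos : 0 < Q.coeff d / a.leadingCoeff) :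
    ∀ᶠ ω in cocompact ℝ, (evalI Q ω / evalI a ω).re ≤ 0 := by
  have ha0 : a ≠ 0 := ne_zero_of_natDegree_gt (n := 0) (by omega)
  have hlim := (tendsto_eval_div_eval_mul_pow_cobounded (Q.map (algebraMap ℝ ℂ))
    (a.map (algebraMap ℝ ℂ)) (natDegree_map_le.trans hQ) (by rw [natDegree_map, ha])
    ((Polynomial.map_ne_zero_iff (algebraMap ℝ ℂ).injective).mpr ha0)).comp
    tendsto_ofReal_mul_I_cobounded
  have hre := (Complex.continuous_re.tendsto _).comp hlim
  rw [← Metric.cobounded_eq_cocompact]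
  have hpos' :
      0 < ((Q.map (algebraMap ℝ ℂ)).coeff d / (a.map (algebraMap ℝ ℂ)).leadingCoeff).re := by
    simpa [coeff_map, leadingCoeff_map] using hpos
  filter_upwards [hre.eventually (eventually_gt_nhds hpos')] with ω hω
  have hI : ((ω : ℂ) * Complex.I) ^ 2 = ((-ω ^ 2 : ℝ) : ℂ) := by
    push_cast; rw [mul_pow, Complex.I_sq]; ring
  simp only [Function.comp_apply, hI, Complex.re_mul_ofReal] at hω
  rw [evalI, evalI]
  nlinarith [sq_nonneg ω]

theorem continuous_evalI (p : ℝ[X]) : Continuous (evalI p) :=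
  (p.map (algebraMap ℝ ℂ)).continuous.comp (Complex.continuous_ofReal.mul continuous_const)

theorem re_evalI_sub_C_mul_div (p q a : ℝ[X]) (ε ω : ℝ) :
    (evalI (p - C ε * q) ω / evalI a ω).re =
      (evalI p ω / evalI a ω).re - ε * (evalI q ω / evalI a ω).re := by
  simp only [evalI, Polynomial.map_sub, Polynomial.map_mul, map_C, eval_sub, eval_mul, eval_C,
    sub_div, mul_div_assoc, Complex.sub_re]
  exact congrArg _ (Complex.re_ofReal_mul ε _)

noncomputable def monicOfCoeffs {m : ℕ} (x : Fin (m + 1) → ℝ) : ℝ[X] :=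
  X ^ (m + 1) + ∑ i : Fin (m + 1), C (x i) * X ^ (m + 1 - ((i : ℕ) + 1))

noncomputable def onesPoly (m : ℕ) : ℝ[X] :=
  ∑ i : Fin (m + 1), X ^ (m + 1 - ((i : ℕ) + 1))

theorem monicOfCoeffs_sub_const {m : ℕ} (x : Fin (m + 1) → ℝ) (ε : ℝ) :
    monicOfCoeffs (fun i => x i - ε) = monicOfCoeffs x - C ε * onesPoly m := by
  simp only [monicOfCoeffs, onesPoly, map_sub, sub_mul, Finset.sum_sub_distrib, Finset.mul_sum,
    add_sub_assoc]

theorem natDegree_onesPoly_le (m : ℕ) : (onesPoly m).natDegree ≤ m :=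
  natDegree_sum_le_of_forall_le _ _ fun i _ => by rw [natDegree_X_pow]; omega

theorem coeff_onesPoly_self (m : ℕ) : (onesPoly m).coeff m = 1 := by
  rw [onesPoly, finsetSum_coeff, Fin.sum_univ_succ, Finset.sum_eq_zero fun i _ => ?_]
  · simp
  · rw [coeff_X_pow, if_neg (by simp; omega)]

theorem stmt16_general (m : ℕ) (a : Polynomial ℝ)
    (hmona : a.Monic) (hdega : a.natDegree = m + 2)
    (x : Fin (m+1) → ℝ)
    (hx : ∀ ω : ℝ,
      0 < (evalI (Polynomial.X ^ (m+1) +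
            ∑ i : Fin (m+1), Polynomial.C (x i) * Polynomial.X ^ (m + 1 - ((i : ℕ) + 1))) ω
          / evalI a ω).re) :
    ∃ ε₀ : ℝ, 0 < ε₀ ∧ ∀ ε : ℝ, 0 < ε → ε < ε₀ →
      ∀ ω : ℝ,
        0 < (evalI (Polynomial.X ^ (m+1) +
              ∑ i : Fin (m+1), Polynomial.C (x i - ε) * Polynomial.X ^ (m + 1 - ((i : ℕ) + 1))) ω
            / evalI a ω).re := by
  -- `z / 0 = 0`, so `hx` already forces `a(iω) ≠ 0`.
  have ha_ne : ∀ ω, evalI a ω ≠ 0 := fun ω h => by simpa [h] using hx ω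
  have hcont (p : ℝ[X]) : Continuous fun ω => (evalI p ω / evalI a ω).re :=
    Complex.continuous_re.comp ((continuous_evalI p).div (continuous_evalI a) ha_ne)
  have hones : ∀ᶠ ω in cocompact ℝ, (evalI (onesPoly m) ω / evalI a ω).re ≤ 0 :=
    eventually_re_evalI_div_nonpos _ _ (natDegree_onesPoly_le m) hdega
      (by simp [coeff_onesPoly_self, hmona.leadingCoeff])
  obtain ⟨ε₀, hε₀, hpert⟩ := exists_pos_forall_pos_sub_mul (hcont (monicOfCoeffs x))
    (hcont (onesPoly m)) hx hones
  refine ⟨ε₀, hε₀, fun ε hε hεε ω => ?_⟩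
  change 0 < (evalI (monicOfCoeffs fun i => x i - ε) ω / evalI a ω).re
  rw [monicOfCoeffs_sub_const, re_evalI_sub_C_mul_div]
  exact hpert ε hε hεε ω

/-- If (x₁,…,x_{n-1}) ∈ Ω^W_{1a}, then for all sufficiently small ε > 0 the
point (x₁-ε,…,x_{n-1}-ε) also belongs to Ω^W_{1a}. (Here n = m + 2 ≥ 2.) -/
theorem stmt16 (m : ℕ) (a : Polynomial ℝ) (ha : Hurwitz a)
    (hmona : a.Monic) (hdega : a.natDegree = m + 2)
    (x : Fin (m+1) → ℝ)
    (hx : ∀ ω : ℝ,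
      0 < (evalI (Polynomial.X ^ (m+1) +
            ∑ i : Fin (m+1), Polynomial.C (x i) * Polynomial.X ^ (m + 1 - ((i : ℕ) + 1))) ω
          / evalI a ω).re) :
    ∃ ε₀ : ℝ, 0 < ε₀ ∧ ∀ ε : ℝ, 0 < ε → ε < ε₀ →
      ∀ ω : ℝ,
        0 < (evalI (Polynomial.X ^ (m+1) +
              ∑ i : Fin (m+1), Polynomial.C (x i - ε) * Polynomial.X ^ (m + 1 - ((i : ℕ) + 1))) ω
            / evalI a ω).re :=
  stmt16_general m a hmona hdega x hx
end

section
/- Let a₁, a₂ be Hurwitz stable real polynomials of degree n and c a real polynomial such that both c/a₁ and c/a₂ are SPR. Then for all α ≥ 0, β ≥ 0 with (α,β) ≠ (0,0), the function c/(α·a₁ + β·a₂) is SPR; in particular α·a₁ + β·a₂ is Hurwitz stable and Re[c(iω)/(α·a₁(iω)+β·a₂(iω))] > 0 for all real ω. -/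
open Polynomial

/-!
On the closed right half-plane `c/aᵢ` is continuous, holomorphic inside (`aᵢ` is Hurwitz and, by
the SPR hypothesis, has no root on the imaginary axis) and bounded at infinity (`deg c ≤ deg aᵢ`).
Phragmén–Lindelöf applied to `exp (-c/aᵢ)` spreads `Re (c/aᵢ) ≥ 0` from the axis to the
half-plane, and the maximum modulus principle makes it strict. As `w ↦ 1/w` preserves the open
right half-plane, `Re (aᵢ/c) > 0` there too, hence `Re ((α a₁ + β a₂)/c) > 0` and, inverting once
more, `Re (c/(α a₁ + β a₂)) > 0` on the closed half-plane; in particular `α a₁ + β a₂` has no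
root there.
-/

open Complex Filter Bornology Asymptotics

lemma Polynomial.isBoundedUnder_norm_eval_div_cobounded {R : Type*} [NormedField R]
    {C A : R[X]} (hA : A ≠ 0) (h : C.degree ≤ A.degree) :
    IsBoundedUnder (· ≤ ·) (cobounded R) fun z => ‖C.eval z / A.eval z‖ := by
  have hne : ∀ᶠ z in cobounded R, A.eval z ≠ 0 :=
    Bornology.le_cofinite R (eventually_cofinite_not_isRoot hA)
  simpa only [norm_div] using
    (isBigO_iff_isBoundedUnder_le_div hne).1 (isBigO_cobounded_of_degree_le h)

namespace Complex

lemma eq_im_mul_I_of_re_eq_zero {z : ℂ} (h : z.re = 0) : z = z.im * I := by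
  apply Complex.ext <;> simp [h]

lemma ne_zero_of_re_div_pos {u v : ℂ} (h : 0 < (u / v).re) : v ≠ 0 := by
  rintro rfl; simp at h

lemma re_div_pos_symm {u v : ℂ} (h : 0 < (u / v).re) : 0 < (v / u).re := by
  have hu : u ≠ 0 := by rintro rfl; simp at h
  rw [← inv_div, inv_re]
  exact div_pos h (normSq_pos.2 (div_ne_zero hu (ne_zero_of_re_div_pos h)))

lemma re_div_mul_add_mul_pos {u v₁ v₂ : ℂ} {α β : ℝ} (h₁ : 0 < (u / v₁).re) (h₂ : 0 < (u / v₂).re)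
    (hα : 0 ≤ α) (hβ : 0 ≤ β) (hαβ : (α, β) ≠ (0, 0)) :
    0 < (u / (α * v₁ + β * v₂)).re := by
  apply re_div_pos_symm
  rw [add_div, mul_div_assoc, mul_div_assoc, add_re, re_ofReal_mul, re_ofReal_mul]
  have r₁ := re_div_pos_symm h₁
  have r₂ := re_div_pos_symm h₂
  rcases hα.eq_or_lt with rfl | hα'
  · have hβ' : 0 < β := hβ.lt_of_ne (by rintro rfl; exact hαβ rfl)
    simpa using mul_pos hβ' r₂
  · exact add_pos_of_pos_of_nonneg (mul_pos hα' r₁) (mul_nonneg hβ r₂.le)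

variable {F : ℂ → ℂ}

lemma re_nonneg_of_diffContOnCl_of_re_nonneg_on_imAxis (hd : DiffContOnCl ℂ F {z | 0 < z.re})
    (hb : IsBoundedUnder (· ≤ ·) (cobounded ℂ) fun z => ‖F z‖)
    (him : ∀ y : ℝ, 0 ≤ (F (y * I)).re) {z : ℂ} (hz : 0 ≤ z.re) : 0 ≤ (F z).re := by
  set g : ℂ → ℂ := fun z => exp (-F z)
  have hgd : DiffContOnCl ℂ g {z | 0 < z.re} := differentiable_exp.comp_diffContOnCl hd.neg
  have hgb : IsBoundedUnder (· ≤ ·) (cobounded ℂ) fun z => ‖g z‖ := by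
    obtain ⟨M, hM⟩ := hb
    refine ⟨Real.exp M, eventually_map.2 ?_⟩
    filter_upwards [eventually_map.1 hM] with w hw
    rw [norm_exp, Real.exp_le_exp, neg_re]
    linarith [neg_le_of_abs_le ((abs_re_le_norm (F w)).trans hw)]
  have hexp : ∃ c < (2 : ℝ), ∃ B,
      g =O[cobounded ℂ ⊓ 𝓟 {z | 0 < z.re}] fun z => Real.exp (B * ‖z‖ ^ c) := by
    refine ⟨0, two_pos, 0, ?_⟩
    simpa using ((isBigO_one_iff ℝ).2 hgb).mono inf_le_left
  have hre : IsBoundedUnder (· ≤ ·) atTop fun x : ℝ => ‖g x‖ :=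
    (isBigO_one_iff ℝ).1 <|
      ((isBigO_one_iff ℝ).2 hgb).comp_tendsto (RCLike.tendsto_ofReal_atTop_cobounded ℂ)
  have hle : ‖g z‖ ≤ 1 :=
    PhragmenLindelof.right_half_plane_of_bounded_on_real hgd hexp hre
      (fun y => by simpa [g, norm_exp] using him y) hz
  simpa [g, norm_exp] using hle

lemma re_pos_of_diffContOnCl_of_re_pos_on_imAxis (hd : DiffContOnCl ℂ F {z | 0 < z.re})
    (hb : IsBoundedUnder (· ≤ ·) (cobounded ℂ) fun z => ‖F z‖)
    (him : ∀ y : ℝ, 0 < (F (y * I)).re) {z : ℂ} (hz : 0 ≤ z.re) : 0 < (F z).re := by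
  have hnonneg : ∀ w : ℂ, 0 ≤ w.re → 0 ≤ (F w).re := fun w hw =>
    re_nonneg_of_diffContOnCl_of_re_nonneg_on_imAxis hd hb (fun y => (him y).le) hw
  rcases hz.eq_or_lt with hz | hz
  · exact eq_im_mul_I_of_re_eq_zero hz.symm ▸ him z.im
  refine (hnonneg z hz.le).lt_of_ne fun hzero => ?_
  -- `exp (-F)` has modulus `≤ 1` on the half-plane and `= 1` at `z`, so it is constant up to the
  -- boundary, contradicting `‖exp (-F 0)‖ < 1`.
  set g : ℂ → ℂ := fun z => exp (-F z)
  have hmax : IsMaxOn (norm ∘ g) {w | 0 < w.re} z := fun w (hw : 0 < w.re) => by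
    simpa [g, norm_exp, ← hzero] using hnonneg w hw.le
  have hconst := eqOn_closure_of_isPreconnected_of_isMaxOn_norm
    (convex_halfSpace_re_gt 0).isPreconnected (isOpen_lt continuous_const continuous_re)
    (differentiable_exp.comp_diffContOnCl hd.neg) hz hmax
  have h0 : ‖g 0‖ = ‖g z‖ := congrArg norm (hconst (by simp))
  simp only [g, norm_exp, neg_re, ← hzero, neg_zero, Real.exp_zero, Real.exp_eq_one_iff] at h0
  exact (him 0).ne' (by simpa using h0)

end Complex

lemma Polynomial.re_eval_div_pos_of_re_nonneg {C A : ℂ[X]}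
    (hA : ∀ z : ℂ, 0 ≤ z.re → A.eval z ≠ 0) (hdeg : C.degree ≤ A.degree)
    (him : ∀ y : ℝ, 0 < (C.eval (y * I) / A.eval (y * I)).re) {z : ℂ} (hz : 0 ≤ z.re) :
    0 < (C.eval z / A.eval z).re := by
  have hA0 : A ≠ 0 := by rintro rfl; simpa using hA 0 le_rfl
  have hd : DiffContOnCl ℂ (fun z => C.eval z / A.eval z) {z | 0 < z.re} :=
    ⟨C.differentiable.differentiableOn.div A.differentiable.differentiableOn
        fun w hw => hA w (le_of_lt hw),
      closure_setOfPred_lt_re 0 ▸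
        C.continuous.continuousOn.div A.continuous.continuousOn hA⟩
  exact re_pos_of_diffContOnCl_of_re_pos_on_imAxis hd
    (isBoundedUnder_norm_eval_div_cobounded hA0 hdeg) him hz

lemma eval_map_smul_add_smul (α β : ℝ) (p q : ℝ[X]) (z : ℂ) :
    ((α • p + β • q).map (algebraMap ℝ ℂ)).eval z =
      α * (p.map (algebraMap ℝ ℂ)).eval z + β * (q.map (algebraMap ℝ ℂ)).eval z := by
  simp [Polynomial.map_add, Polynomial.map_smul, Complex.real_smul]

lemma Hurwitz.eval_map_ne_zero {a : ℝ[X]} (ha : Hurwitz a) (haxis : ∀ ω : ℝ, evalI a ω ≠ 0)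
    {z : ℂ} (hz : 0 ≤ z.re) : (a.map (algebraMap ℝ ℂ)).eval z ≠ 0 := by
  rcases hz.eq_or_lt with hz | hz
  · exact eq_im_mul_I_of_re_eq_zero hz.symm ▸ haxis z.im
  · exact fun h => (ha z h).not_gt hz

lemma Hurwitz.re_eval_div_pos {a c : ℝ[X]} (ha : Hurwitz a) (hdeg : c.degree ≤ a.degree)
    (hspr : ∀ ω : ℝ, 0 < (evalI c ω / evalI a ω).re) {z : ℂ} (hz : 0 ≤ z.re) :
    0 < ((c.map (algebraMap ℝ ℂ)).eval z / (a.map (algebraMap ℝ ℂ)).eval z).re :=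
  re_eval_div_pos_of_re_nonneg
    (fun _ => ha.eval_map_ne_zero fun ω => ne_zero_of_re_div_pos (hspr ω))
    (by simpa only [degree_map] using hdeg) hspr hz

/-- Convexity in the denominator: if c/a₁ and c/a₂ are both SPR, then for all
α, β ≥ 0 with (α,β) ≠ (0,0), the combination α·a₁ + β·a₂ is Hurwitz and
c/(α·a₁ + β·a₂) is SPR. -/
theorem stmt18 (n : ℕ) (a₁ a₂ c : Polynomial ℝ)
    (ha₁ : Hurwitz a₁) (ha₂ : Hurwitz a₂)
    (hdeg₁ : a₁.degree = n) (hdeg₂ : a₂.degree = n) (hdegc : c.degree = n)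
    (hspr₁ : ∀ ω : ℝ, 0 < (evalI c ω / evalI a₁ ω).re)
    (hspr₂ : ∀ ω : ℝ, 0 < (evalI c ω / evalI a₂ ω).re) :
    ∀ α β : ℝ, 0 ≤ α → 0 ≤ β → (α, β) ≠ (0, 0) →
      Hurwitz (α • a₁ + β • a₂) ∧
      ∀ ω : ℝ, 0 < (evalI c ω / evalI (α • a₁ + β • a₂) ω).re := by
  intro α β hα hβ hαβ
  have hpos : ∀ z : ℂ, 0 ≤ z.re → 0 < ((c.map (algebraMap ℝ ℂ)).eval z /
      ((α • a₁ + β • a₂).map (algebraMap ℝ ℂ)).eval z).re := fun z hz => by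
    rw [eval_map_smul_add_smul]
    exact re_div_mul_add_mul_pos (ha₁.re_eval_div_pos (hdegc.trans hdeg₁.symm).le hspr₁ hz)
      (ha₂.re_eval_div_pos (hdegc.trans hdeg₂.symm).le hspr₂ hz) hα hβ hαβ
  refine ⟨fun z hroot => ?_, fun ω => hpos _ (by simp)⟩
  by_contra! hz
  exact ne_zero_of_re_div_pos (hpos z hz) hroot
end
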